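/- arXiv:1911.02482 — 2 statements merged into one kernel-verified Lean document; each statement's English description precedes it below -/
import Mathlib

section
/- Let n ≥ 4, let V be an n-dimensional real vector space with a nondegenerate symmetric bilinear form h, let 𝒮 be an h-self-adjoint endomorphism, S(X,Y) = h(X,𝒮Y), R* = (1/2) S∧S. If R* = (φ/2)·Ric(R*)∧Ric(R*) + μ·h∧Ric(R*) + (η/2)·h∧h for some real numbers φ ≠ 0, μ, η, then R*·R* = ((n−2)(μ² − φη) − μ)·φ⁻¹·Q(h, R*). -/
namespace OVAff

variable {V : Type*} [AddCommGroup V] [Module ℝ V]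

/-- Kulkarni–Nomizu product of two (0,2)-tensors. -/
noncomputable def KN (E F : V → V → ℝ) : V → V → V → V → ℝ := fun X₁ X₂ X₃ X₄ =>
  E X₁ X₄ * F X₂ X₃ + E X₂ X₃ * F X₁ X₄ - E X₁ X₃ * F X₂ X₄ - E X₂ X₄ * F X₁ X₃

/-- Kulkarni–Nomizu product of a (0,2)-tensor with a (0,4)-tensor. -/
noncomputable def KN4 (E : V → V → ℝ) (T : V → V → V → V → ℝ) :
    V → V → V → V → V → V → ℝ := fun X₁ X₂ X₃ X₄ Y₁ Y₂ =>
  E X₁ X₄ * T X₂ X₃ Y₁ Y₂ + E X₂ X₃ * T X₁ X₄ Y₁ Y₂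
    - E X₁ X₃ * T X₂ X₄ Y₁ Y₂ - E X₂ X₄ * T X₁ X₃ Y₁ Y₂

/-- (X ∧_A Y) Z = A(Y,Z) X − A(X,Z) Y. -/
noncomputable def wedgeVec (A : V → V → ℝ) (X Y Z : V) : V := A Y Z • X - A X Z • Y

/-- Tachibana operator Q(A,T) on a (0,2)-tensor T. -/
noncomputable def Q2 (A T : V → V → ℝ) : V → V → V → V → ℝ :=
  fun X₁ X₂ X Y => -(T (wedgeVec A X Y X₁) X₂ + T X₁ (wedgeVec A X Y X₂))

/-- Tachibana operator Q(A,T) on a (0,4)-tensor T. -/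
noncomputable def Q4 (A : V → V → ℝ) (T : V → V → V → V → ℝ) :
    V → V → V → V → V → V → ℝ := fun X₁ X₂ X₃ X₄ X Y =>
  -(T (wedgeVec A X Y X₁) X₂ X₃ X₄ + T X₁ (wedgeVec A X Y X₂) X₃ X₄
    + T X₁ X₂ (wedgeVec A X Y X₃) X₄ + T X₁ X₂ X₃ (wedgeVec A X Y X₄))

/-- The derivation B·T of a curvature operator family ℬ (with h(ℬ(X,Y)Z,W)=B(X,Y,Z,W))
acting on a (0,2)-tensor T. -/
noncomputable def dot2 (ℬ : V → V → V → V) (T : V → V → ℝ) : V → V → V → V → ℝ :=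
  fun X₁ X₂ X Y => -(T (ℬ X Y X₁) X₂ + T X₁ (ℬ X Y X₂))

/-- The derivation B·T acting on a (0,4)-tensor T. -/
noncomputable def dot4 (ℬ : V → V → V → V) (T : V → V → V → V → ℝ) :
    V → V → V → V → V → V → ℝ := fun X₁ X₂ X₃ X₄ X Y =>
  -(T (ℬ X Y X₁) X₂ X₃ X₄ + T X₁ (ℬ X Y X₂) X₃ X₄
    + T X₁ X₂ (ℬ X Y X₃) X₄ + T X₁ X₂ X₃ (ℬ X Y X₄))

/-- Ricci contraction of a (0,4)-tensor with respect to an h-orthonormal basis `e`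
with signs `ε`. -/
noncomputable def ricci {n : ℕ} (ε : Fin n → ℝ) (e : Fin n → V)
    (B : V → V → V → V → ℝ) : V → V → ℝ :=
  fun X Y => ∑ j, ε j * B (e j) X Y (e j)

/-- Scalar curvature of a (0,4)-tensor. -/
noncomputable def scal {n : ℕ} (ε : Fin n → ℝ) (e : Fin n → V)
    (B : V → V → V → V → ℝ) : ℝ :=
  ∑ j, ε j * ricci ε e B (e j) (e j)

/-- Weyl tensor of a (0,4)-tensor with respect to the metric h. -/
noncomputable def weyl {n : ℕ} (h : V → V → ℝ) (ε : Fin n → ℝ) (e : Fin n → V)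
    (B : V → V → V → V → ℝ) : V → V → V → V → ℝ := fun X₁ X₂ X₃ X₄ =>
  B X₁ X₂ X₃ X₄ - (1 / ((n : ℝ) - 2)) * KN h (ricci ε e B) X₁ X₂ X₃ X₄
    + (scal ε e B / (2 * ((n : ℝ) - 2) * ((n : ℝ) - 1))) * KN h h X₁ X₂ X₃ X₄

end OVAff

/-!
Write `Ric(X, Y) = h(X, P Y)`; since `R* = ½ S∧S`, the Ricci operator is `P = tr(𝒮) 𝒮 − 𝒮²`,
self-adjoint. Contracting the Roter equation gives a quadratic equation
`φ P² = (φ tr P + μ(n−2) − 1) P + (μ tr P + η(n−1)) id`. Substituting it into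
`Ric(ℬ(X,Y)X₁, X₂) = R*(X, Y, X₁, P X₂)` yields `R*·Ric = L Q(h, Ric)` with
`L = ((n−2)(μ² − φη) − μ)/φ`. Both `R*·` and `Q(h, ·)` are derivations annihilating `h`, so applying
them to the Roter expression of `R*` gives `R*·R* = L Q(h, R*)`.
-/

namespace OVAff

variable {V : Type*}

noncomputable def roter (φ μ η : ℝ) (E F : V → V → ℝ) : V → V → V → V → ℝ :=
  (φ / 2) • KN F F + μ • KN E F + (η / 2) • KN E E

theorem KN_swap (E F : V → V → ℝ) (X₁ X₂ X₃ X₄ : V) :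
    KN E F X₁ X₂ X₄ X₃ = -KN E F X₁ X₂ X₃ X₄ := by
  simp only [KN]; ring

theorem roter_swap (φ μ η : ℝ) (E F : V → V → ℝ) (X₁ X₂ X₃ X₄ : V) :
    roter φ μ η E F X₁ X₂ X₄ X₃ = -roter φ μ η E F X₁ X₂ X₃ X₄ := by
  simp only [roter, Pi.add_apply, Pi.smul_apply, smul_eq_mul, KN_swap E F X₁ X₂ X₃ X₄,
    KN_swap F F X₁ X₂ X₃ X₄, KN_swap E E X₁ X₂ X₃ X₄]
  ring

theorem ricci_add {n : ℕ} (ε : Fin n → ℝ) (e : Fin n → V) (B C : V → V → V → V → ℝ) :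
    ricci ε e (B + C) = ricci ε e B + ricci ε e C := by
  ext X Y
  simp only [ricci, Pi.add_apply, mul_add, Finset.sum_add_distrib]

theorem ricci_smul {n : ℕ} (ε : Fin n → ℝ) (e : Fin n → V) (c : ℝ) (B : V → V → V → V → ℝ) :
    ricci ε e (c • B) = c • ricci ε e B := by
  ext X Y
  simp only [ricci, Pi.smul_apply, smul_eq_mul, Finset.mul_sum]
  exact Finset.sum_congr rfl fun _ _ => by ring

theorem dot4_roter (ℬ : V → V → V → V) (φ μ η : ℝ) (E F : V → V → ℝ) (X₁ X₂ X₃ X₄ X Y : V) :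
    dot4 ℬ (roter φ μ η E F) X₁ X₂ X₃ X₄ X Y
      = φ * KN4 F (dot2 ℬ F) X₁ X₂ X₃ X₄ X Y
        + μ * (KN4 E (dot2 ℬ F) X₁ X₂ X₃ X₄ X Y + KN4 F (dot2 ℬ E) X₁ X₂ X₃ X₄ X Y)
        + η * KN4 E (dot2 ℬ E) X₁ X₂ X₃ X₄ X Y := by
  simp only [dot4, roter, KN4, dot2, KN, Pi.add_apply, Pi.smul_apply, smul_eq_mul]
  ring

variable [AddCommGroup V] [Module ℝ V]

theorem dot4_roter_eq_mul_Q4 (ℬ : V → V → V → V) (φ μ η c : ℝ) (E F : V → V → ℝ)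
    (hE : ∀ X₁ X₂ X Y, dot2 ℬ E X₁ X₂ X Y = 0) (hEE : ∀ X₁ X₂ X Y, Q2 E E X₁ X₂ X Y = 0)
    (hF : ∀ X₁ X₂ X Y, dot2 ℬ F X₁ X₂ X Y = c * Q2 E F X₁ X₂ X Y) (X₁ X₂ X₃ X₄ X Y : V) :
    dot4 ℬ (roter φ μ η E F) X₁ X₂ X₃ X₄ X Y = c * Q4 E (roter φ μ η E F) X₁ X₂ X₃ X₄ X Y := by
  rw [show Q4 E = dot4 (wedgeVec E) from rfl, dot4_roter, dot4_roter,
    show dot2 (wedgeVec E) = Q2 E from rfl]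
  simp only [KN4, hE, hEE, hF]
  ring

section Metric

variable (h : LinearMap.BilinForm ℝ V) (hsymm : ∀ X Y, h X Y = h Y X)
include hsymm

theorem dot2_metric_eq_zero (ℬ : V → V → V → V) (T : V → V → V → V → ℝ)
    (hℬ : ∀ X Y Z W, h (ℬ X Y Z) W = T X Y Z W) (hT : ∀ X Y Z W, T X Y W Z = -T X Y Z W)
    (X₁ X₂ X Y : V) : dot2 ℬ (fun X Y => h X Y) X₁ X₂ X Y = 0 := by
  simp only [dot2]
  rw [hsymm X₁, hℬ, hℬ, hT]
  ring

theorem Q2_metric_self_eq_zero (X₁ X₂ X Y : V) :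
    Q2 (fun X Y => h X Y) (fun X Y => h X Y) X₁ X₂ X Y = 0 := by
  simp only [Q2, wedgeVec, map_sub, map_smul, LinearMap.sub_apply, LinearMap.smul_apply, smul_eq_mul]
  rw [hsymm X₁ X, hsymm X₁ Y]
  ring

theorem dot2_roter_eq_mul_Q2 (P : V →ₗ[ℝ] V) (hP : ∀ X Y, h (P X) Y = h X (P Y))
    (ℬ : V → V → V → V) (φ μ η α β : ℝ)
    (hℬ : ∀ X Y Z W,
      h (ℬ X Y Z) W = roter φ μ η (fun X Y => h X Y) (fun X Y => h X (P Y)) X Y Z W)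
    (hPP : ∀ X Y, h X (P (P Y)) = α * h X (P Y) + β * h X Y) (X₁ X₂ X Y : V) :
    dot2 ℬ (fun X Y => h X (P Y)) X₁ X₂ X Y
      = (μ * α - φ * β + η) * Q2 (fun X Y => h X Y) (fun X Y => h X (P Y)) X₁ X₂ X Y := by
  simp only [dot2, Q2]
  -- `Ric (ℬ X Y Z) W = R X Y Z (P W)`, and the relation for `P ∘ P` removes the second power of `P`
  rw [← hP X₁ (ℬ X Y X₂), hsymm (P X₁), hℬ, hℬ]
  simp only [roter, KN, Pi.add_apply, Pi.smul_apply, smul_eq_mul, hPP, wedgeVec, map_sub, map_smul,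
    LinearMap.sub_apply, LinearMap.smul_apply]
  rw [← hP X₁ X, ← hP X₁ Y, hsymm (P X₁) X, hsymm (P X₁) Y]
  ring

end Metric

section SignedOrthonormalBasis

variable {n : ℕ} (h : LinearMap.BilinForm ℝ V) (e : Module.Basis (Fin n) ℝ V) {ε : Fin n → ℝ}

theorem apply_basis_eq (he : ∀ j k, h (e j) (e k) = if j = k then ε j else 0) (X : V) (j : Fin n) :
    h X (e j) = ε j * e.repr X j := by
  conv_lhs => rw [← e.sum_repr X]
  simp only [map_sum, map_smul, LinearMap.sum_apply, LinearMap.smul_apply, he, smul_eq_mul,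
    mul_ite, mul_zero, Finset.sum_ite_eq', Finset.mem_univ, if_true]
  exact mul_comm _ _

variable (hε : ∀ j, ε j = 1 ∨ ε j = -1) (he : ∀ j k, h (e j) (e k) = if j = k then ε j else 0)
include hε he

theorem sum_sign_mul_apply_basis_mul (X Y : V) :
    ∑ j, ε j * (h X (e j) * h Y (e j)) = h X Y := by
  have hε2 : ∀ j, ε j * ε j = 1 := fun j => by rcases hε j with h1 | h1 <;> simp [h1]
  conv_rhs => rw [← e.sum_repr Y]
  simp only [map_sum, map_smul, smul_eq_mul, apply_basis_eq h e he]
  refine Finset.sum_congr rfl fun j _ => ?_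
  linear_combination (e.repr X j * e.repr Y j * ε j) * hε2 j

theorem sum_sign_mul_apply_eq_trace (hsymm : ∀ X Y, h X Y = h Y X) (T : V →ₗ[ℝ] V) :
    ∑ j, ε j * h (e j) (T (e j)) = LinearMap.trace ℝ V T := by
  have hε2 : ∀ j, ε j * ε j = 1 := fun j => by rcases hε j with h1 | h1 <;> simp [h1]
  rw [LinearMap.trace_eq_matrix_trace ℝ e, Matrix.trace]
  refine Finset.sum_congr rfl fun j _ => ?_
  rw [hsymm, apply_basis_eq h e he, Matrix.diag_apply, LinearMap.toMatrix_apply, ← mul_assoc,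
    hε2, one_mul]

theorem ricci_KN (hsymm : ∀ X Y, h X Y = h Y X) (A B : V →ₗ[ℝ] V)
    (hA : ∀ X Y, h (A X) Y = h X (A Y)) (hB : ∀ X Y, h (B X) Y = h X (B Y)) (X Y : V) :
    ricci ε e (KN (fun X Y => h X (A Y)) (fun X Y => h X (B Y))) X Y
      = LinearMap.trace ℝ V A * h X (B Y) + LinearMap.trace ℝ V B * h X (A Y)
        - h X (B (A Y)) - h X (A (B Y)) := by
  have hterm : ∀ j, ε j * KN (fun X Y => h X (A Y)) (fun X Y => h X (B Y)) (e j) X Y (e j)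
      = ε j * h (e j) (A (e j)) * h X (B Y) + ε j * h (e j) (B (e j)) * h X (A Y)
        - ε j * (h (A Y) (e j) * h (B X) (e j)) - ε j * (h (A X) (e j) * h (B Y) (e j)) := by
    intro j
    simp only [KN]
    rw [hsymm (e j) (A Y), hsymm (e j) (B Y), ← hB X (e j), ← hA X (e j)]
    ring
  simp only [ricci, hterm, Finset.sum_sub_distrib, Finset.sum_add_distrib, ← Finset.sum_mul,
    sum_sign_mul_apply_basis_mul h e hε he, sum_sign_mul_apply_eq_trace h e hε he hsymm]
  rw [hsymm (A Y), hB, hA]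

theorem ricci_half_KN_self (hsymm : ∀ X Y, h X Y = h Y X) (𝒮 : V →ₗ[ℝ] V)
    (hsa : ∀ X Y, h (𝒮 X) Y = h X (𝒮 Y)) (X Y : V) :
    ricci ε e ((1 / 2 : ℝ) • KN (fun X Y => h X (𝒮 Y)) (fun X Y => h X (𝒮 Y))) X Y
      = h X ((LinearMap.trace ℝ V 𝒮 • 𝒮 - 𝒮 ∘ₗ 𝒮) Y) := by
  rw [ricci_smul, Pi.smul_apply, Pi.smul_apply, ricci_KN h e hε he hsymm 𝒮 𝒮 hsa hsa]
  simp only [LinearMap.sub_apply, LinearMap.smul_apply, LinearMap.comp_apply, map_sub, map_smul,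
    smul_eq_mul]
  ring

theorem apply_comp_self_of_ricci_roter (hsymm : ∀ X Y, h X Y = h Y X) (P : V →ₗ[ℝ] V)
    (hP : ∀ X Y, h (P X) Y = h X (P Y)) (φ μ η : ℝ)
    (hRic : ricci ε e (roter φ μ η (fun X Y => h X Y) (fun X Y => h X (P Y)))
      = fun X Y => h X (P Y)) (X Y : V) :
    φ * h X (P (P Y)) = (φ * LinearMap.trace ℝ V P + μ * (n - 2) - 1) * h X (P Y)
      + (μ * LinearMap.trace ℝ V P + η * (n - 1)) * h X Y := by
  have : Module.Free ℝ V := Module.Free.of_basis e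
  have : Module.Finite ℝ V := Module.Finite.of_basis e
  have hid : ∀ X Y : V, h (LinearMap.id (R := ℝ) X) Y = h X (LinearMap.id (R := ℝ) Y) :=
    fun _ _ => rfl
  have hPP : ricci ε e (KN (fun X Y => h X (P Y)) (fun X Y => h X (P Y))) X Y = _ :=
    ricci_KN h e hε he hsymm P P hP hP X Y
  have hEP : ricci ε e (KN (fun X Y => h X Y) (fun X Y => h X (P Y))) X Y = _ :=
    ricci_KN h e hε he hsymm LinearMap.id P hid hP X Y
  have hEE : ricci ε e (KN (fun X Y => h X Y) (fun X Y => h X Y)) X Y = _ :=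
    ricci_KN h e hε he hsymm LinearMap.id LinearMap.id hid hid X Y
  have hXY := congrFun₂ hRic X Y
  simp only [roter, ricci_add, ricci_smul, Pi.add_apply, Pi.smul_apply, smul_eq_mul, hPP, hEP,
    hEE, LinearMap.trace_id, Module.finrank_eq_card_basis e, Fintype.card_fin,
    LinearMap.id_apply] at hXY
  linear_combination -hXY

end SignedOrthonormalBasis

theorem statement5_general
    {V : Type*} [AddCommGroup V] [Module ℝ V]
    (n : ℕ)
    (h : LinearMap.BilinForm ℝ V)
    (hsymm : ∀ X Y, h X Y = h Y X)
    (e : Module.Basis (Fin n) ℝ V) (ε : Fin n → ℝ)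
    (hε : ∀ j, ε j = 1 ∨ ε j = -1)
    (he : ∀ j k, h (e j) (e k) = if j = k then ε j else 0)
    (𝒮 : V →ₗ[ℝ] V) (hsa : ∀ X Y, h (𝒮 X) Y = h X (𝒮 Y))
    (S : V → V → ℝ) (hS : S = fun X Y => h X (𝒮 Y))
    (Rstar : V → V → V → V → ℝ)
    (hRstar : Rstar = fun X₁ X₂ X₃ X₄ => (1 / 2 : ℝ) * KN S S X₁ X₂ X₃ X₄)
    (ℬ : V → V → V → V)
    (hℬ : ∀ X Y Z W, h (ℬ X Y Z) W = Rstar X Y Z W)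
    (Ric : V → V → ℝ) (hRic : Ric = ricci ε (⇑e) Rstar)
    (φ μ η : ℝ) (hφ : φ ≠ 0)
    (hRoter : ∀ X₁ X₂ X₃ X₄, Rstar X₁ X₂ X₃ X₄
      = (φ / 2) * KN Ric Ric X₁ X₂ X₃ X₄
        + μ * KN (fun X Y => h X Y) Ric X₁ X₂ X₃ X₄
        + (η / 2) * KN (fun X Y => h X Y) (fun X Y => h X Y) X₁ X₂ X₃ X₄) :
    ∀ X₁ X₂ X₃ X₄ X Y,
      dot4 ℬ Rstar X₁ X₂ X₃ X₄ X Y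
        = (((n : ℝ) - 2) * (μ ^ 2 - φ * η) - μ) * φ⁻¹
          * Q4 (fun X Y => h X Y) Rstar X₁ X₂ X₃ X₄ X Y := by
  set P := LinearMap.trace ℝ V 𝒮 • 𝒮 - 𝒮 ∘ₗ 𝒮
  have hP : ∀ X Y, h (P X) Y = h X (P Y) := by
    intro X Y
    simp only [P, LinearMap.sub_apply, LinearMap.smul_apply, LinearMap.comp_apply, map_sub,
      map_smul, hsa]
  have hRicP : Ric = fun X Y => h X (P Y) := by
    subst hRic hRstar hS
    ext X Y
    exact ricci_half_KN_self h e hε he hsymm 𝒮 hsa X Y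
  have hR : Rstar = roter φ μ η (fun X Y => h X Y) (fun X Y => h X (P Y)) := by
    ext X₁ X₂ X₃ X₄
    rw [hRoter, ← hRicP]
    simp only [roter, Pi.add_apply, Pi.smul_apply, smul_eq_mul]
  have hPP : ∀ X Y, h X (P (P Y))
      = φ⁻¹ * (φ * LinearMap.trace ℝ V P + μ * (n - 2) - 1) * h X (P Y)
        + φ⁻¹ * (μ * LinearMap.trace ℝ V P + η * (n - 1)) * h X Y := by
    intro X Y
    have := apply_comp_self_of_ricci_roter h e hε he hsymm P hP φ μ η
      (by rw [← hR, ← hRic, hRicP]) X Y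
    field_simp
    linear_combination this
  intro X₁ X₂ X₃ X₄ X Y
  rw [hR]
  refine dot4_roter_eq_mul_Q4 ℬ φ μ η _ _ _
    (dot2_metric_eq_zero h hsymm ℬ _ (hR ▸ hℬ) (roter_swap φ μ η _ _))
    (Q2_metric_self_eq_zero h hsymm) (fun X₁ X₂ X Y => ?_) X₁ X₂ X₃ X₄ X Y
  rw [dot2_roter_eq_mul_Q2 h hsymm P hP ℬ φ μ η _ _ (hR ▸ hℬ) hPP]
  congr 1
  field_simp
  ring

/-- a Roter-type expression for R* implies R*·R* = ((n−2)(μ²−φη)−μ)φ⁻¹·Q(h,R*). -/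
theorem statement5
    {V : Type*} [AddCommGroup V] [Module ℝ V]
    (n : ℕ) (hn : 4 ≤ n)
    (h : LinearMap.BilinForm ℝ V)
    (hsymm : ∀ X Y, h X Y = h Y X)
    (hnd : ∀ X : V, (∀ Y, h X Y = 0) → X = 0)
    (e : Module.Basis (Fin n) ℝ V) (ε : Fin n → ℝ)
    (hε : ∀ j, ε j = 1 ∨ ε j = -1)
    (he : ∀ j k, h (e j) (e k) = if j = k then ε j else 0)
    (𝒮 : V →ₗ[ℝ] V) (hsa : ∀ X Y, h (𝒮 X) Y = h X (𝒮 Y))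
    (S : V → V → ℝ) (hS : S = fun X Y => h X (𝒮 Y))
    (Rstar : V → V → V → V → ℝ)
    (hRstar : Rstar = fun X₁ X₂ X₃ X₄ => (1 / 2 : ℝ) * KN S S X₁ X₂ X₃ X₄)
    (ℬ : V → V → V → V)
    (hℬ : ∀ X Y Z W, h (ℬ X Y Z) W = Rstar X Y Z W)
    (Ric : V → V → ℝ) (hRic : Ric = ricci ε (⇑e) Rstar)
    (φ μ η : ℝ) (hφ : φ ≠ 0)
    (hRoter : ∀ X₁ X₂ X₃ X₄, Rstar X₁ X₂ X₃ X₄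
      = (φ / 2) * KN Ric Ric X₁ X₂ X₃ X₄
        + μ * KN (fun X Y => h X Y) Ric X₁ X₂ X₃ X₄
        + (η / 2) * KN (fun X Y => h X Y) (fun X Y => h X Y) X₁ X₂ X₃ X₄) :
    ∀ X₁ X₂ X₃ X₄ X Y,
      dot4 ℬ Rstar X₁ X₂ X₃ X₄ X Y
        = (((n : ℝ) - 2) * (μ ^ 2 - φ * η) - μ) * φ⁻¹
          * Q4 (fun X Y => h X Y) Rstar X₁ X₂ X₃ X₄ X Y :=
  statement5_general n h hsymm e ε hε he 𝒮 hsa S hS Rstar hRstar ℬ hℬ Ric hRic φ μ η hφ hRoter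

end OVAff
end

section
/- Let n ≥ 4, let V be an n-dimensional real vector space with a positive definite symmetric bilinear form h, let 𝒮 be an h-self-adjoint endomorphism with exactly two distinct eigenvalues λ₁ (of multiplicity k) and λ₂ (of multiplicity n−k), where 2 ≤ k ≤ n−2 and (k−1)λ₁ + (n−k−1)λ₂ ≠ 0; set S(X,Y) = h(X,𝒮Y) and R* = (1/2) S∧S. Then R* = (φ/2)·(Ric(R*) − λ₁λ₂·h) ∧ (Ric(R*) − λ₁λ₂·h), where φ = ((k−1)λ₁ + (n−k−1)λ₂)⁻². -/
namespace OVAff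

variable {V : Type*} [AddCommGroup V] [Module ℝ V]

/-! Since the eigenspaces of `𝒮` for `λ₁ ≠ λ₂` have dimensions adding up to `n`, they are
complementary, so `𝒮² = (λ₁ + λ₂) 𝒮 - λ₁λ₂` and `tr 𝒮 = kλ₁ + (n - k)λ₂`. Contracting
`R* = ½ S ∧ S` in an orthonormal basis gives `Ric(R*)(X, Y) = tr 𝒮 · S(X, Y) - h(X, 𝒮²Y)`, hence
`Ric(R*) - λ₁λ₂ h = c S` with `c = (k - 1)λ₁ + (n - k - 1)λ₂`. As `c ≠ 0`, substituting
`S = c⁻¹ (Ric(R*) - λ₁λ₂ h)` into `R* = ½ S ∧ S` gives the formula. -/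

section Eigenspaces

open Module Module.End

variable {K M : Type*} [Field K] [AddCommGroup M] [Module K M]

theorem isCompl_eigenspace_of_finrank_add_eq [FiniteDimensional K M] (f : End K M) {a b : K}
    (hab : a ≠ b) (hdim : finrank K (f.eigenspace a) + finrank K (f.eigenspace b) = finrank K M) :
    IsCompl (f.eigenspace a) (f.eigenspace b) :=
  (Submodule.isCompl_iff_disjoint _ _ hdim.ge).2 (f.disjoint_genEigenspace hab 1 1)

theorem apply_apply_eq_of_eigenspace_sup_eq_top (f : End K M) {a b : K}
    (hsup : f.eigenspace a ⊔ f.eigenspace b = ⊤) (x : M) :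
    f (f x) = (a + b) • f x - (a * b) • x := by
  obtain ⟨y, hy, z, hz, rfl⟩ := Submodule.mem_sup.1 (hsup ▸ Submodule.mem_top : x ∈ _)
  rw [mem_eigenspace_iff] at hy hz
  simp only [map_add, map_smul, hy, hz]
  module

theorem trace_eq_of_isCompl_eigenspace [FiniteDimensional K M] (f : End K M) {a b : K}
    (hcompl : IsCompl (f.eigenspace a) (f.eigenspace b)) :
    LinearMap.trace K M f
      = finrank K (f.eigenspace a) * a + finrank K (f.eigenspace b) * b := by
  let φ := Submodule.prodEquivOfIsCompl _ _ hcompl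
  have hdiag : φ.symm.conj f = (a • LinearMap.id).prodMap (b • LinearMap.id) := by
    apply LinearMap.prod_ext <;> ext ⟨y, hy⟩ <;>
      simp [φ, LinearEquiv.conj_apply, mem_eigenspace_iff.1 hy,
        Submodule.projection_apply_of_mem_left, hy]
  rw [← LinearMap.trace_conj' f φ.symm, hdiag, LinearMap.trace_prodMap']
  simp [mul_comm]

end Eigenspaces

section OrthonormalBasis

open Module

variable {R M : Type*} [CommRing R] [AddCommGroup M] [Module R M] {n : ℕ}
  {h : LinearMap.BilinForm R M} {e : Basis (Fin n) R M}

theorem BilinForm.apply_basis_left_eq_repr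
    (he : ∀ i j, h (e i) (e j) = if i = j then (1 : R) else 0) (j : Fin n) (v : M) :
    h (e j) v = e.repr v j := by
  conv_lhs => rw [← e.sum_repr v]
  simp only [map_sum, map_smul, he, smul_eq_mul, mul_ite, mul_one, mul_zero,
    Finset.sum_ite_eq, Finset.mem_univ, if_true]

theorem BilinForm.sum_apply_basis_mul_apply_basis
    (he : ∀ i j, h (e i) (e j) = if i = j then (1 : R) else 0) (v w : M) :
    ∑ j, h v (e j) * h (e j) w = h v w := by
  conv_rhs => rw [← e.sum_repr w]
  simp only [map_sum, map_smul, smul_eq_mul, BilinForm.apply_basis_left_eq_repr he, mul_comm]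

theorem BilinForm.trace_eq_sum_apply_basis
    (he : ∀ i j, h (e i) (e j) = if i = j then (1 : R) else 0) (f : Module.End R M) :
    LinearMap.trace R M f = ∑ j, h (e j) (f (e j)) := by
  simp [LinearMap.trace_eq_matrix_trace R e, Matrix.trace, LinearMap.toMatrix_apply,
    BilinForm.apply_basis_left_eq_repr he]

end OrthonormalBasis

theorem KN_mul_mul {W : Type*} (c : ℝ) (E F : W → W → ℝ) (X₁ X₂ X₃ X₄ : W) :
    KN (fun X Y => c * E X Y) (fun X Y => c * F X Y) X₁ X₂ X₃ X₄ = c ^ 2 * KN E F X₁ X₂ X₃ X₄ := by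
  simp only [KN]
  ring

theorem ricci_half_KN_self_s8 {W : Type*} {n : ℕ} (e : Fin n → W) (S : W → W → ℝ) (X Y : W) :
    ricci (fun _ => 1) e (fun X₁ X₂ X₃ X₄ => (1 / 2 : ℝ) * KN S S X₁ X₂ X₃ X₄) X Y
      = (∑ j, S (e j) (e j)) * S X Y - ∑ j, S X (e j) * S (e j) Y := by
  simp only [ricci, KN, Finset.sum_mul, ← Finset.sum_sub_distrib]
  exact Finset.sum_congr rfl fun j _ => by ring

theorem ricci_half_KN_shapeOperator {n : ℕ} (h : LinearMap.BilinForm ℝ V)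
    (e : Module.Basis (Fin n) ℝ V) (he : ∀ i j, h (e i) (e j) = if i = j then (1 : ℝ) else 0)
    (𝒮 : V →ₗ[ℝ] V) (hsa : ∀ X Y, h (𝒮 X) Y = h X (𝒮 Y)) (X Y : V) :
    ricci (fun _ => 1) e
        (fun X₁ X₂ X₃ X₄ => (1 / 2 : ℝ) * KN (fun X Y => h X (𝒮 Y)) (fun X Y => h X (𝒮 Y))
          X₁ X₂ X₃ X₄) X Y
      = LinearMap.trace ℝ V 𝒮 * h X (𝒮 Y) - h X (𝒮 (𝒮 Y)) := by
  rw [ricci_half_KN_self_s8, BilinForm.trace_eq_sum_apply_basis he, ← hsa X (𝒮 Y),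
    ← BilinForm.sum_apply_basis_mul_apply_basis he (𝒮 X)]
  simp only [hsa]

theorem statement8_general
    {V : Type*} [AddCommGroup V] [Module ℝ V]
    (n : ℕ)
    (h : LinearMap.BilinForm ℝ V)
    [FiniteDimensional ℝ V] (hdim : Module.finrank ℝ V = n)
    (e : Module.Basis (Fin n) ℝ V)
    (he : ∀ j k, h (e j) (e k) = if j = k then (1 : ℝ) else 0)
    (𝒮 : V →ₗ[ℝ] V) (hsa : ∀ X Y, h (𝒮 X) Y = h X (𝒮 Y))
    (S : V → V → ℝ) (hS : S = fun X Y => h X (𝒮 Y))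
    (Rstar : V → V → V → V → ℝ)
    (hRstar : Rstar = fun X₁ X₂ X₃ X₄ => (1 / 2 : ℝ) * KN S S X₁ X₂ X₃ X₄)
    (k : ℕ) (hkn : k ≤ n - 2)
    (l₁ l₂ : ℝ) (hne : l₁ ≠ l₂)
    (hm₁ : Module.finrank ℝ ↥(Module.End.eigenspace 𝒮 l₁) = k)
    (hm₂ : Module.finrank ℝ ↥(Module.End.eigenspace 𝒮 l₂) = n - k)
    (hcnd : ((k : ℝ) - 1) * l₁ + ((n : ℝ) - (k : ℝ) - 1) * l₂ ≠ 0) :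
    ∀ X₁ X₂ X₃ X₄, Rstar X₁ X₂ X₃ X₄
      = ((((k : ℝ) - 1) * l₁ + ((n : ℝ) - (k : ℝ) - 1) * l₂) ^ 2)⁻¹ / 2
        * KN (fun X Y => ricci (fun _ => (1 : ℝ)) (⇑e) Rstar X Y - l₁ * l₂ * h X Y)
            (fun X Y => ricci (fun _ => (1 : ℝ)) (⇑e) Rstar X Y - l₁ * l₂ * h X Y)
            X₁ X₂ X₃ X₄ := by
  subst hS hRstar
  set c := ((k : ℝ) - 1) * l₁ + ((n : ℝ) - (k : ℝ) - 1) * l₂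
  have hcompl : IsCompl (Module.End.eigenspace 𝒮 l₁) (Module.End.eigenspace 𝒮 l₂) :=
    isCompl_eigenspace_of_finrank_add_eq 𝒮 hne (by omega)
  have htrace : LinearMap.trace ℝ V 𝒮 = k * l₁ + (n - k) * l₂ := by
    rw [trace_eq_of_isCompl_eigenspace 𝒮 hcompl, hm₁, hm₂, Nat.cast_sub (by omega)]
  have hricci : ∀ X Y, ricci (fun _ => 1) e
      (fun X₁ X₂ X₃ X₄ => (1 / 2 : ℝ) * KN (fun X Y => h X (𝒮 Y)) (fun X Y => h X (𝒮 Y))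
        X₁ X₂ X₃ X₄) X Y - l₁ * l₂ * h X Y
      = c * h X (𝒮 Y) := by
    intro X Y
    rw [ricci_half_KN_shapeOperator h e he 𝒮 hsa, htrace,
      apply_apply_eq_of_eigenspace_sup_eq_top 𝒮 hcompl.sup_eq_top, map_sub, map_smul, map_smul,
      smul_eq_mul, smul_eq_mul]
    ring
  intro X₁ X₂ X₃ X₄
  simp only [hricci, KN_mul_mul]
  field_simp

/-- two distinct affine principal curvatures with multiplicities k and n−k,
2 ≤ k ≤ n−2 and (k−1)λ₁+(n−k−1)λ₂ ≠ 0: Roter-type form for R*. -/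
theorem statement8
    {V : Type*} [AddCommGroup V] [Module ℝ V]
    (n : ℕ) (hn : 4 ≤ n)
    (h : LinearMap.BilinForm ℝ V)
    (hsymm : ∀ X Y, h X Y = h Y X)
    (hnd : ∀ X : V, (∀ Y, h X Y = 0) → X = 0)
    [FiniteDimensional ℝ V] (hdim : Module.finrank ℝ V = n)
    (hpos : ∀ X : V, X ≠ 0 → 0 < h X X)
    (e : Module.Basis (Fin n) ℝ V)
    (he : ∀ j k, h (e j) (e k) = if j = k then (1 : ℝ) else 0)
    (𝒮 : V →ₗ[ℝ] V) (hsa : ∀ X Y, h (𝒮 X) Y = h X (𝒮 Y))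
    (S : V → V → ℝ) (hS : S = fun X Y => h X (𝒮 Y))
    (Rstar : V → V → V → V → ℝ)
    (hRstar : Rstar = fun X₁ X₂ X₃ X₄ => (1 / 2 : ℝ) * KN S S X₁ X₂ X₃ X₄)
    (k : ℕ) (hk2 : 2 ≤ k) (hkn : k ≤ n - 2)
    (l₁ l₂ : ℝ) (hne : l₁ ≠ l₂)
    (heig : ∀ t : ℝ, Module.End.HasEigenvalue 𝒮 t ↔ t = l₁ ∨ t = l₂)
    (hm₁ : Module.finrank ℝ ↥(Module.End.eigenspace 𝒮 l₁) = k)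
    (hm₂ : Module.finrank ℝ ↥(Module.End.eigenspace 𝒮 l₂) = n - k)
    (hcnd : ((k : ℝ) - 1) * l₁ + ((n : ℝ) - (k : ℝ) - 1) * l₂ ≠ 0) :
    ∀ X₁ X₂ X₃ X₄, Rstar X₁ X₂ X₃ X₄
      = ((((k : ℝ) - 1) * l₁ + ((n : ℝ) - (k : ℝ) - 1) * l₂) ^ 2)⁻¹ / 2
        * KN (fun X Y => ricci (fun _ => (1 : ℝ)) (⇑e) Rstar X Y - l₁ * l₂ * h X Y)
            (fun X Y => ricci (fun _ => (1 : ℝ)) (⇑e) Rstar X Y - l₁ * l₂ * h X Y)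
            X₁ X₂ X₃ X₄ :=
  statement8_general n h hdim e he 𝒮 hsa S hS Rstar hRstar k hkn l₁ l₂ hne hm₁ hm₂ hcnd

end OVAff
end
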